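/- Let B be a real s×d matrix, T a real d×t matrix, ε ≥ 0, and k an integer with 0 ≤ k ≤ s. Suppose that for every s×s orthogonal projection matrix Q with rank(Q) ≤ k it holds that ‖(I−Q)B‖_F² ≤ ‖(I−Q)BT‖_F² ≤ (1+ε)‖(I−Q)B‖_F². Then res_k(B)² ≤ res_k(BT)² ≤ (1+ε)·res_k(B)². (This is the row-space version of Lemma 3.5, obtained by applying it to Tᵀ and Bᵀ, used in the proof of the paper's bilinear-sketch upper bound.) -/

import Mathlib

/-- Squared Frobenius norm of a real matrix. -/
noncomputable def frobSq {n d : ℕ} (M : Matrix (Fin n) (Fin d) ℝ) : ℝ :=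
  ∑ i, ∑ j, (M i j) ^ 2

/-- An orthogonal projection matrix: symmetric and idempotent. -/
def IsOrthProj {d : ℕ} (P : Matrix (Fin d) (Fin d) ℝ) : Prop :=
  P.transpose = P ∧ P * P = P

/-- Squared rank-`k` residual error: infimum of `‖M - B‖_F²` over matrices `B` of rank `≤ k`. -/
noncomputable def resSq {n d : ℕ} (k : ℕ) (M : Matrix (Fin n) (Fin d) ℝ) : ℝ :=
  sInf {x : ℝ | ∃ B : Matrix (Fin n) (Fin d) ℝ, B.rank ≤ k ∧ x = frobSq (M - B)}

/-! Both residuals are infima of `‖(1 - Q) M‖_F²` over orthogonal projections `Q` of rank `≤ k`.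
Indeed `Q M` has rank `≤ k`; conversely, a rank-`k` approximation `C` of `M` is beaten by the
projection `Q` onto the column span of `C`, because `(1 - Q) (M - C) = (1 - Q) M` and the
projection `1 - Q` contracts the Frobenius norm. The hypothesis compares the two sides for each
such `Q`, so it passes to the infima. -/

open Matrix

variable {n m : ℕ}

lemma frobSq_nonneg (M : Matrix (Fin n) (Fin m) ℝ) : 0 ≤ frobSq M := by
  unfold frobSq; positivity

lemma frobSq_eq_trace (M : Matrix (Fin n) (Fin m) ℝ) : frobSq M = trace (M * Mᵀ) := by
  simp [frobSq, trace, mul_apply, sq]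

lemma isOrthProj_iff_isStarProjection {P : Matrix (Fin n) (Fin n) ℝ} :
    IsOrthProj P ↔ IsStarProjection P := by
  rw [isStarProjection_iff', IsOrthProj, star_eq_conjTranspose,
    conjTranspose_eq_transpose_of_trivial, and_comm]

lemma IsOrthProj.one_sub {P : Matrix (Fin n) (Fin n) ℝ} (hP : IsOrthProj P) :
    IsOrthProj (1 - P) :=
  isOrthProj_iff_isStarProjection.2 (isOrthProj_iff_isStarProjection.1 hP).one_sub

lemma IsOrthProj.frobSq_mul {P : Matrix (Fin n) (Fin n) ℝ} (hP : IsOrthProj P)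
    (M : Matrix (Fin n) (Fin m) ℝ) : frobSq (P * M) = trace (P * (M * Mᵀ)) := by
  rw [frobSq_eq_trace, transpose_mul, hP.1, ← Matrix.mul_assoc, trace_mul_comm,
    ← Matrix.mul_assoc, ← Matrix.mul_assoc, hP.2, Matrix.mul_assoc]

lemma IsOrthProj.frobSq_mul_add_frobSq_one_sub_mul {P : Matrix (Fin n) (Fin n) ℝ}
    (hP : IsOrthProj P) (M : Matrix (Fin n) (Fin m) ℝ) :
    frobSq (P * M) + frobSq ((1 - P) * M) = frobSq M := by
  rw [hP.frobSq_mul, hP.one_sub.frobSq_mul, ← trace_add, ← Matrix.add_mul,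
    add_sub_cancel, Matrix.one_mul, frobSq_eq_trace]

lemma IsOrthProj.frobSq_mul_le {P : Matrix (Fin n) (Fin n) ℝ} (hP : IsOrthProj P)
    (M : Matrix (Fin n) (Fin m) ℝ) : frobSq (P * M) ≤ frobSq M := by
  linarith [hP.frobSq_mul_add_frobSq_one_sub_mul M, frobSq_nonneg ((1 - P) * M)]

lemma rank_eq_finrank_range_toEuclideanLin (M : Matrix (Fin n) (Fin m) ℝ) :
    M.rank = Module.finrank ℝ (LinearMap.range (toEuclideanLin M)) :=
  M.rank_eq_finrank_range_toLin (PiLp.basisFun 2 ℝ (Fin n)) (PiLp.basisFun 2 ℝ (Fin m))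

noncomputable def colSpanProj (C : Matrix (Fin n) (Fin m) ℝ) : Matrix (Fin n) (Fin n) ℝ :=
  (toEuclideanCLM (𝕜 := ℝ) (n := Fin n)).symm (LinearMap.range (toEuclideanLin C)).starProjection

lemma isOrthProj_colSpanProj (C : Matrix (Fin n) (Fin m) ℝ) : IsOrthProj (colSpanProj C) :=
  isOrthProj_iff_isStarProjection.2
    (isStarProjection_starProjection.map (toEuclideanCLM (𝕜 := ℝ) (n := Fin n)).symm.toStarAlgHom)

lemma toEuclideanCLM_colSpanProj (C : Matrix (Fin n) (Fin m) ℝ) :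
    toEuclideanCLM (𝕜 := ℝ) (n := Fin n) (colSpanProj C) =
      (LinearMap.range (toEuclideanLin C)).starProjection :=
  StarAlgEquiv.apply_symm_apply _ _

lemma rank_colSpanProj (C : Matrix (Fin n) (Fin m) ℝ) : (colSpanProj C).rank = C.rank := by
  rw [rank_eq_finrank_range_toEuclideanLin, rank_eq_finrank_range_toEuclideanLin,
    ← coe_toEuclideanCLM_eq_toEuclideanLin, toEuclideanCLM_colSpanProj,
    Submodule.range_starProjection]

lemma colSpanProj_mul_self (C : Matrix (Fin n) (Fin m) ℝ) : colSpanProj C * C = C := by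
  refine toEuclideanLin.injective (LinearMap.ext fun x => ?_)
  rw [toLpLin_mul_same, LinearMap.comp_apply, ← coe_toEuclideanCLM_eq_toEuclideanLin,
    toEuclideanCLM_colSpanProj]
  exact Submodule.starProjection_eq_self_iff.2 (LinearMap.mem_range_self _ x)

lemma resSq_le_frobSq_one_sub_mul {k : ℕ} (M : Matrix (Fin n) (Fin m) ℝ)
    {Q : Matrix (Fin n) (Fin n) ℝ} (hQk : Q.rank ≤ k) :
    resSq k M ≤ frobSq ((1 - Q) * M) := by
  have hbdd : BddBelow {x : ℝ | ∃ C : Matrix (Fin n) (Fin m) ℝ, C.rank ≤ k ∧ x = frobSq (M - C)} :=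
    ⟨0, by rintro _ ⟨C, -, rfl⟩; exact frobSq_nonneg _⟩
  exact csInf_le hbdd
    ⟨Q * M, (rank_mul_le_left Q M).trans hQk, by rw [Matrix.sub_mul, Matrix.one_mul]⟩

lemma le_resSq {k : ℕ} {M : Matrix (Fin n) (Fin m) ℝ} {a : ℝ}
    (h : ∀ Q : Matrix (Fin n) (Fin n) ℝ, IsOrthProj Q → Q.rank ≤ k → a ≤ frobSq ((1 - Q) * M)) :
    a ≤ resSq k M := by
  refine le_csInf ⟨_, 0, by simp, rfl⟩ ?_
  rintro _ ⟨C, hC, rfl⟩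
  set Q := colSpanProj C
  have hQ : IsOrthProj Q := isOrthProj_colSpanProj C
  have hC_killed : (1 - Q) * (M - C) = (1 - Q) * M := by
    rw [Matrix.mul_sub, Matrix.sub_mul _ _ C, Matrix.one_mul, colSpanProj_mul_self, sub_self,
      sub_zero]
  calc a ≤ frobSq ((1 - Q) * M) := h Q hQ ((rank_colSpanProj C).trans_le hC)
    _ = frobSq ((1 - Q) * (M - C)) := by rw [hC_killed]
    _ ≤ frobSq (M - C) := hQ.one_sub.frobSq_mul_le _

theorem pcp_preserves_residual_rows_general {s d t : ℕ} (B : Matrix (Fin s) (Fin d) ℝ)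
    (T : Matrix (Fin d) (Fin t) ℝ) (ε : ℝ) (hε : 0 ≤ ε) (k : ℕ)
    (h : ∀ Q : Matrix (Fin s) (Fin s) ℝ, IsOrthProj Q → Q.rank ≤ k →
      frobSq ((1 - Q) * B) ≤ frobSq ((1 - Q) * (B * T)) ∧
      frobSq ((1 - Q) * (B * T)) ≤ (1 + ε) * frobSq ((1 - Q) * B)) :
    resSq k B ≤ resSq k (B * T) ∧
    resSq k (B * T) ≤ (1 + ε) * resSq k B := by
  have h1ε : 0 < 1 + ε := by linarith
  constructor
  · exact le_resSq fun Q hQ hQk =>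
      (resSq_le_frobSq_one_sub_mul B hQk).trans (h Q hQ hQk).1
  · rw [← div_le_iff₀' h1ε]
    refine le_resSq fun Q hQ hQk => ?_
    rw [div_le_iff₀' h1ε]
    exact (resSq_le_frobSq_one_sub_mul (B * T) hQk).trans (h Q hQ hQk).2

theorem pcp_preserves_residual_rows {s d t : ℕ} (B : Matrix (Fin s) (Fin d) ℝ)
    (T : Matrix (Fin d) (Fin t) ℝ) (ε : ℝ) (hε : 0 ≤ ε) (k : ℕ) (hk : k ≤ s)
    (h : ∀ Q : Matrix (Fin s) (Fin s) ℝ, IsOrthProj Q → Q.rank ≤ k →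
      frobSq ((1 - Q) * B) ≤ frobSq ((1 - Q) * (B * T)) ∧
      frobSq ((1 - Q) * (B * T)) ≤ (1 + ε) * frobSq ((1 - Q) * B)) :
    resSq k B ≤ resSq k (B * T) ∧
    resSq k (B * T) ≤ (1 + ε) * resSq k B :=
  pcp_preserves_residual_rows_general B T ε hε k h
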